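/- arXiv:1605.03826 — 3 statements merged into one kernel-verified Lean document; each statement's English description precedes it below -/
import Mathlib

section
/- Assume every bidder's valuation is monotone gross substitute. For every price vector p ∈ ℕ^m and every nonempty S ⊆ Ω with p_j ≥ 1 for all j ∈ S and S ∉ DD(p), there exists a nonempty weakly over-demanded set at p − 1_S, i.e. WOD(p − 1_S) ≠ {∅}. -/
/-- Utility of a bundle `S` at prices `p`: `v(S) - p(S)` (an integer). -/
def util {m : ℕ} (v : Finset (Fin m) → ℕ) (p : Fin m → ℕ) (S : Finset (Fin m)) : ℤ :=
  (v S : ℤ) - ∑ j ∈ S, (p j : ℤ)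

/-- Demand collection: bundles of maximum utility at prices `p`. -/
def demand {m : ℕ} (v : Finset (Fin m) → ℕ) (p : Fin m → ℕ) : Finset (Finset (Fin m)) :=
  Finset.univ.filter fun D => ∀ T : Finset (Fin m), util v p T ≤ util v p D

lemma demand_nonempty {m : ℕ} (v : Finset (Fin m) → ℕ) (p : Fin m → ℕ) :
    (demand v p).Nonempty := by
  obtain ⟨D, hD, hmax⟩ := Finset.exists_max_image (Finset.univ : Finset (Finset (Fin m)))
    (util v p) ⟨∅, Finset.mem_univ ∅⟩
  exact ⟨D, Finset.mem_filter.2 ⟨Finset.mem_univ D, fun T => hmax T (Finset.mem_univ T)⟩⟩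

/-- Maximum utility of a bidder at prices `p`. -/
def uMax {m : ℕ} (v : Finset (Fin m) → ℕ) (p : Fin m → ℕ) : ℤ :=
  Finset.univ.sup' Finset.univ_nonempty (util v p)

/-- A valuation is monotone with respect to inclusion. -/
def MonotoneVal {m : ℕ} (v : Finset (Fin m) → ℕ) : Prop :=
  ∀ ⦃S T : Finset (Fin m)⦄, S ⊆ T → v S ≤ v T

/-- Gross substitute: if `S` is demanded at `p` and `q ≥ p`, some demanded set at `q`
contains every item of `S` whose price did not change. -/
def GrossSub {m : ℕ} (v : Finset (Fin m) → ℕ) : Prop :=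
  ∀ p q : Fin m → ℕ, p ≤ q → ∀ S ∈ demand v p,
    ∃ S' ∈ demand v q, ∀ j ∈ S, p j = q j → j ∈ S'

/-- Requirement `l_p(S)` of a single bidder. -/
def req {m : ℕ} (v : Finset (Fin m) → ℕ) (p : Fin m → ℕ) (S : Finset (Fin m)) : ℕ :=
  (demand v p).inf' (demand_nonempty v p) fun D => (S ∩ D).card

/-- Redundant `h_p(S)` of a single bidder. -/
def red {m : ℕ} (v : Finset (Fin m) → ℕ) (p : Fin m → ℕ) (S : Finset (Fin m)) : ℕ :=
  (demand v p).sup' (demand_nonempty v p) fun D => (S ∩ D).card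

/-- Auction requirement `l^p(S)`. -/
def reqAll {m n : ℕ} (v : Fin n → Finset (Fin m) → ℕ) (p : Fin m → ℕ) (S : Finset (Fin m)) : ℕ :=
  ∑ i, req (v i) p S

/-- Auction redundant `h^p(S)`. -/
def redAll {m n : ℕ} (v : Fin n → Finset (Fin m) → ℕ) (p : Fin m → ℕ) (S : Finset (Fin m)) : ℕ :=
  ∑ i, red (v i) p S

/-- Lyapunov function `L(p) = Σ_i u_i(p) + Σ_j p_j`. -/
def lyap {m n : ℕ} (v : Fin n → Finset (Fin m) → ℕ) (p : Fin m → ℕ) : ℤ :=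
  ∑ i, uMax (v i) p + ∑ j, (p j : ℤ)

/-- `p` is Walrasian: there is a partition of the items into demanded sets. -/
def IsWalrasian {m n : ℕ} (v : Fin n → Finset (Fin m) → ℕ) (p : Fin m → ℕ) : Prop :=
  ∃ A : Fin n → Finset (Fin m),
    (∀ i j, i ≠ j → Disjoint (A i) (A j)) ∧
    Finset.univ.biUnion A = Finset.univ ∧
    ∀ i, A i ∈ demand (v i) p

/-- `p + 1_S`. -/
def incr {m : ℕ} (p : Fin m → ℕ) (S : Finset (Fin m)) : Fin m → ℕ :=
  fun j => if j ∈ S then p j + 1 else p j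

/-- `p - 1_S`. -/
def decr {m : ℕ} (p : Fin m → ℕ) (S : Finset (Fin m)) : Fin m → ℕ :=
  fun j => if j ∈ S then p j - 1 else p j

/-- `S` is over-demanded at `p`: `l^p(S) > |S|`. -/
def OverDemanded {m n : ℕ} (v : Fin n → Finset (Fin m) → ℕ) (p : Fin m → ℕ)
    (S : Finset (Fin m)) : Prop :=
  S.card < reqAll v p S

/-- `S` is weakly over-demanded at `p`: `l^p(S) ≥ |S|`. -/
def WeaklyOverDemanded {m n : ℕ} (v : Fin n → Finset (Fin m) → ℕ) (p : Fin m → ℕ)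
    (S : Finset (Fin m)) : Prop :=
  S.card ≤ reqAll v p S

/-- `S` is under-demanded at `p`: `h^p(S) < |S|`. -/
def UnderDemanded {m n : ℕ} (v : Fin n → Finset (Fin m) → ℕ) (p : Fin m → ℕ)
    (S : Finset (Fin m)) : Prop :=
  redAll v p S < S.card

/-- `S` is weakly under-demanded at `p`: `h^p(S) ≤ |S|`. -/
def WeaklyUnderDemanded {m n : ℕ} (v : Fin n → Finset (Fin m) → ℕ) (p : Fin m → ℕ)
    (S : Finset (Fin m)) : Prop :=
  redAll v p S ≤ S.card

/-- `S ∈ ED(p)`: `S` is over-demanded at `p` and no nonempty `T ⊆ S` is weakly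
under-demanded at `p + 1_S`. -/
def ExcessDemand {m n : ℕ} (v : Fin n → Finset (Fin m) → ℕ) (p : Fin m → ℕ)
    (S : Finset (Fin m)) : Prop :=
  OverDemanded v p S ∧
    ∀ T ⊆ S, T ≠ ∅ → ¬ WeaklyUnderDemanded v (incr p S) T

/-- `S ∈ DD(p)`: `S` is under-demanded at `p` and no nonempty `T ⊆ S` is weakly
over-demanded at `p - 1_S`. -/
def DearthDemand {m n : ℕ} (v : Fin n → Finset (Fin m) → ℕ) (p : Fin m → ℕ)
    (S : Finset (Fin m)) : Prop :=
  UnderDemanded v p S ∧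
    ∀ T ⊆ S, T ≠ ∅ → ¬ WeaklyOverDemanded v (decr p S) T

/-- `S` is a minimal minimizer for `p`. -/
def MinimalMinimizer {m n : ℕ} (v : Fin n → Finset (Fin m) → ℕ) (p : Fin m → ℕ)
    (S : Finset (Fin m)) : Prop :=
  lyap v (incr p S) < lyap v p ∧
    (∀ T : Finset (Fin m), lyap v (incr p S) ≤ lyap v (incr p T)) ∧
    ∀ T : Finset (Fin m), T ⊂ S → lyap v (incr p S) < lyap v (incr p T)

/-- `S` is a maximal minimizer for `p`. -/
def MaximalMinimizer {m n : ℕ} (v : Fin n → Finset (Fin m) → ℕ) (p : Fin m → ℕ)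
    (S : Finset (Fin m)) : Prop :=
  lyap v (decr p S) < lyap v p ∧
    (∀ T : Finset (Fin m), lyap v (decr p S) ≤ lyap v (decr p T)) ∧
    ∀ T : Finset (Fin m), T ⊂ S → lyap v (decr p S) < lyap v (decr p T)

lemma util_decr_eq {m : ℕ} (v : Finset (Fin m) → ℕ) (p : Fin m → ℕ) (S : Finset (Fin m))
    (hpos : ∀ j ∈ S, 1 ≤ p j) (T : Finset (Fin m)) :
    util v (decr p S) T = util v p T + ((T ∩ S).card : ℤ) := by
  unfold util decr
  have : ∀ j ∈ T, ((if j ∈ S then p j - 1 else p j : ℕ) : ℤ)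
      = (p j : ℤ) - (if j ∈ S then 1 else 0) := by
    intro j _
    by_cases hj : j ∈ S
    · simp [hj, Nat.cast_sub (hpos j hj)]
    · simp [hj]
  rw [Finset.sum_congr rfl this, Finset.sum_sub_distrib]
  have h2 : (∑ x ∈ T, if x ∈ S then (1:ℤ) else 0) = ((T ∩ S).card : ℤ) := by
    rw [Finset.sum_boole]
    congr 1
  rw [h2]; ring

lemma red_le_req_decr {m : ℕ} (v : Finset (Fin m) → ℕ) (p : Fin m → ℕ) (S : Finset (Fin m))
    (hpos : ∀ j ∈ S, 1 ≤ p j) :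
    red v p S ≤ req v (decr p S) S := by
  unfold red req
  apply Finset.sup'_le
  intro D hD
  apply Finset.le_inf'
  intro D' hD'
  have h1 := (Finset.mem_filter.1 hD).2 D'
  have h2 := (Finset.mem_filter.1 hD').2 D
  rw [util_decr_eq v p S hpos D, util_decr_eq v p S hpos D'] at h2
  have key : ((D ∩ S).card : ℤ) ≤ ((D' ∩ S).card : ℤ) := by linarith
  have : (D ∩ S).card ≤ (D' ∩ S).card := by exact_mod_cast key
  simpa [Finset.inter_comm] using this

theorem stmt17 {m n : ℕ} (v : Fin n → Finset (Fin m) → ℕ)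
    (hzero : ∀ i, v i ∅ = 0) (hmono : ∀ i, MonotoneVal (v i))
    (hgs : ∀ i, GrossSub (v i))
    (p : Fin m → ℕ) (S : Finset (Fin m)) (hS : S ≠ ∅)
    (hpos : ∀ j ∈ S, 1 ≤ p j) (hnotDD : ¬ DearthDemand v p S) :
    ∃ T : Finset (Fin m), T ≠ ∅ ∧ WeaklyOverDemanded v (decr p S) T := by
  rw [DearthDemand, not_and_or] at hnotDD
  rcases hnotDD with h | h
  · refine ⟨S, hS, ?_⟩
    unfold UnderDemanded at h
    push_neg at h
    unfold WeaklyOverDemanded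
    calc S.card ≤ redAll v p S := h
      _ ≤ reqAll v (decr p S) S := by
          unfold redAll reqAll
          exact Finset.sum_le_sum fun i _ => red_le_req_decr (v i) p S hpos
  · push_neg at h
    obtain ⟨T, _, hT, hwod⟩ := h
    exact ⟨T, hT.ne_empty, hwod⟩
end

section
/- There exists a combinatorial auction with all valuations monotone gross substitute, a price vector p ∈ ℕ^m, and a set S ⊆ Ω such that S is in excess demand at p (S ∈ ED(p)) but S is not a minimal minimizer for p. In particular, with three identical additive bidders and two items each valued at 1, at the price vector p = (0,0) each singleton is in ED(p) while the minimal minimizer is the set of both items. -/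
lemma aux_sum_le {m : ℕ} (f : Fin m → ℤ) (D : Finset (Fin m))
    (h1 : ∀ j, 0 < f j → j ∈ D) (h2 : ∀ j ∈ D, 0 ≤ f j) (T : Finset (Fin m)) :
    ∑ j ∈ T, f j ≤ ∑ j ∈ D, f j := by
  have hT : ∑ j ∈ T, f j ≤ ∑ j ∈ T.filter (fun j => 0 < f j), f j := by
    rw [← Finset.sum_filter_add_sum_filter_not T (fun j => 0 < f j)]
    have : ∑ j ∈ T.filter (fun j => ¬ 0 < f j), f j ≤ 0 :=
      Finset.sum_nonpos (fun j hj => le_of_not_gt (Finset.mem_filter.1 hj).2)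
    linarith
  have hsub : T.filter (fun j => 0 < f j) ⊆ D.filter (fun j => 0 < f j) := by
    intro j hj
    rw [Finset.mem_filter] at hj ⊢
    exact ⟨h1 j hj.2, hj.2⟩
  have hmid : ∑ j ∈ T.filter (fun j => 0 < f j), f j
      ≤ ∑ j ∈ D.filter (fun j => 0 < f j), f j := by
    refine Finset.sum_le_sum_of_subset_of_nonneg hsub ?_
    intro j hj _
    exact h2 j (Finset.mem_filter.1 hj).1
  have hD : ∑ j ∈ D.filter (fun j => 0 < f j), f j ≤ ∑ j ∈ D, f j := by
    rw [← Finset.sum_filter_add_sum_filter_not D (fun j => 0 < f j)]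
    have : 0 ≤ ∑ j ∈ D.filter (fun j => ¬ 0 < f j), f j :=
      Finset.sum_nonneg (fun j hj => h2 j (Finset.mem_filter.1 hj).1)
    linarith
  linarith

lemma util_card {m : ℕ} (p : Fin m → ℕ) (T : Finset (Fin m)) :
    util (fun S => S.card) p T = ∑ j ∈ T, (1 - (p j : ℤ)) := by
  simp [util, Finset.sum_sub_distrib]

lemma gs_card {m : ℕ} : GrossSub (m := m) (fun S => S.card) := by
  intro p q hpq S hS
  have hSd : ∀ T : Finset (Fin m), util (fun S => S.card) p T
      ≤ util (fun S => S.card) p S := (Finset.mem_filter.1 hS).2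
  have hS1 : ∀ j ∈ S, p j ≤ 1 := by
    intro j hj
    have := hSd (S.erase j)
    rw [util_card, util_card, ← Finset.add_sum_erase _ _ hj] at this
    have : (1 : ℤ) - p j ≥ 0 := by linarith
    have : (p j : ℤ) ≤ 1 := by linarith
    exact_mod_cast this
  refine ⟨S.filter (fun j => p j = q j) ∪ Finset.univ.filter (fun j => q j = 0),
    ?_, ?_⟩
  · refine Finset.mem_filter.2 ⟨Finset.mem_univ _, fun T => ?_⟩
    rw [util_card, util_card]
    refine aux_sum_le (fun j => 1 - (q j : ℤ)) _ ?_ ?_ T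
    · intro j hj
      have hq0 : q j = 0 := by
        by_contra h
        have : 1 ≤ q j := Nat.one_le_iff_ne_zero.2 h
        have : (1 : ℤ) ≤ (q j : ℤ) := by exact_mod_cast this
        simp at hj; linarith
      exact Finset.mem_union_right _ (Finset.mem_filter.2 ⟨Finset.mem_univ _, hq0⟩)
    · intro j hj
      rcases Finset.mem_union.1 hj with h | h
      · obtain ⟨hjS, hpq'⟩ := Finset.mem_filter.1 h
        have := hS1 j hjS
        have : q j ≤ 1 := hpq' ▸ this
        have : (q j : ℤ) ≤ 1 := by exact_mod_cast this
        show (0:ℤ) ≤ 1 - (q j : ℤ)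
        linarith
      · have : q j = 0 := (Finset.mem_filter.1 h).2
        simp [this]
  · intro j hjS hpqj
    exact Finset.mem_union_left _ (Finset.mem_filter.2 ⟨hjS, hpqj⟩)

theorem stmt18 :
    ∃ (m n : ℕ) (v : Fin n → Finset (Fin m) → ℕ) (p : Fin m → ℕ) (S : Finset (Fin m)),
      (∀ i, v i ∅ = 0) ∧ (∀ i, MonotoneVal (v i)) ∧ (∀ i, GrossSub (v i)) ∧
      ExcessDemand v p S ∧ ¬ MinimalMinimizer v p S := by
  refine ⟨2, 3, fun _ S => S.card, fun _ => 0, {0}, fun _ => rfl, ?_, fun _ => gs_card,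
    ?_, ?_⟩
  · intro i S T hST
    exact Finset.card_le_card hST
  · constructor
    · unfold OverDemanded reqAll req demand util
      decide
    · unfold WeaklyUnderDemanded redAll red demand util incr
      decide
  · unfold MinimalMinimizer lyap uMax util incr
    decide
end

section
/- Assume every bidder's valuation is gross substitute. Then the Lyapunov function is submodular: for any two price vectors p, q ∈ ℕ^m, L(p ∧ q) + L(p ∨ q) ≤ L(p) + L(q), where (p∧q)_j = min{p_j, q_j} and (p∨q)_j = max{p_j, q_j} for every j ∈ Ω. -/
/-! ### Auxiliary development -/

/-- Unit vector of prices. -/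
def eVec {m : ℕ} (i : Fin m) : Fin m → ℕ := fun k => if k = i then 1 else 0

lemma mem_demand {m : ℕ} {v : Finset (Fin m) → ℕ} {p : Fin m → ℕ} {D : Finset (Fin m)} :
    D ∈ demand v p ↔ ∀ T, util v p T ≤ util v p D := by
  simp [demand]

lemma le_uMax {m : ℕ} (v : Finset (Fin m) → ℕ) (p : Fin m → ℕ) (T : Finset (Fin m)) :
    util v p T ≤ uMax v p :=
  Finset.le_sup' (util v p) (Finset.mem_univ T)

lemma uMax_eq_of_mem {m : ℕ} {v : Finset (Fin m) → ℕ} {p : Fin m → ℕ} {D : Finset (Fin m)}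
    (hD : D ∈ demand v p) : uMax v p = util v p D :=
  le_antisymm (Finset.sup'_le _ _ fun T _ => mem_demand.1 hD T) (le_uMax v p D)

lemma util_add_eVec {m : ℕ} (v : Finset (Fin m) → ℕ) (p : Fin m → ℕ) (i : Fin m)
    (T : Finset (Fin m)) :
    util v (p + eVec i) T = util v p T - (if i ∈ T then 1 else 0) := by
  unfold util eVec
  simp only [Pi.add_apply]
  push_cast
  rw [Finset.sum_add_distrib, Finset.sum_ite_eq' T i (fun _ => (1:ℤ))]
  ring

lemma util_anti {m : ℕ} (v : Finset (Fin m) → ℕ) {p q : Fin m → ℕ} (h : p ≤ q)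
    (T : Finset (Fin m)) : util v q T ≤ util v p T := by
  unfold util
  have : (∑ j ∈ T, (p j : ℤ)) ≤ ∑ j ∈ T, (q j : ℤ) :=
    Finset.sum_le_sum fun j _ => by exact_mod_cast h j
  linarith

lemma uMax_anti {m : ℕ} (v : Finset (Fin m) → ℕ) {p q : Fin m → ℕ} (h : p ≤ q) :
    uMax v q ≤ uMax v p :=
  Finset.sup'_le _ _ fun T _ => (util_anti v h T).trans (le_uMax v p T)

lemma le_add_eVec {m : ℕ} (p : Fin m → ℕ) (i : Fin m) : p ≤ p + eVec i :=
  fun k => Nat.le_add_right _ _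

lemma uMax_add_eVec_ge {m : ℕ} (v : Finset (Fin m) → ℕ) (p : Fin m → ℕ) (i : Fin m) :
    uMax v p - 1 ≤ uMax v (p + eVec i) := by
  obtain ⟨D, hD⟩ := demand_nonempty v p
  have h1 : util v (p + eVec i) D ≤ uMax v (p + eVec i) := le_uMax _ _ _
  rw [util_add_eVec] at h1
  have h2 := uMax_eq_of_mem hD
  split at h1 <;> omega

/-- Local submodularity of the indirect utility of a single GS bidder. -/
lemma local_submod {m : ℕ} (v : Finset (Fin m) → ℕ) (hgs : GrossSub v)
    (p : Fin m → ℕ) (i j : Fin m) (hij : i ≠ j) :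
    uMax v p + uMax v (p + eVec i + eVec j) ≤ uMax v (p + eVec i) + uMax v (p + eVec j) := by
  have hcomm : p + eVec i + eVec j = p + eVec j + eVec i := by
    funext k; simp only [Pi.add_apply]; omega
  have h1 : uMax v (p + eVec i) ≤ uMax v p := uMax_anti v (le_add_eVec p i)
  have h2 : uMax v (p + eVec j) ≤ uMax v p := uMax_anti v (le_add_eVec p j)
  have h3 : uMax v (p + eVec i + eVec j) ≤ uMax v (p + eVec i) :=
    uMax_anti v (le_add_eVec _ j)
  have h4 : uMax v (p + eVec i + eVec j) ≤ uMax v (p + eVec j) := by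
    rw [hcomm]; exact uMax_anti v (le_add_eVec _ i)
  have h5 := uMax_add_eVec_ge v p i
  have h6 := uMax_add_eVec_ge v p j
  by_contra hcon
  push_neg at hcon
  have hui : uMax v (p + eVec i) = uMax v p - 1 := by omega
  have huj : uMax v (p + eVec j) = uMax v p - 1 := by omega
  have huij : uMax v (p + eVec i + eVec j) = uMax v p - 1 := by omega
  -- every demanded set at p contains i and j
  have hDi : ∀ D ∈ demand v p, i ∈ D := by
    intro D hD
    by_contra hiD
    have h := le_uMax v (p + eVec i) D
    rw [util_add_eVec, if_neg hiD] at h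
    have h' := uMax_eq_of_mem hD
    omega
  have hDj : ∀ D ∈ demand v p, j ∈ D := by
    intro D hD
    by_contra hjD
    have h := le_uMax v (p + eVec j) D
    rw [util_add_eVec, if_neg hjD] at h
    have h' := uMax_eq_of_mem hD
    omega
  -- every demanded set at p + e_i + e_j excludes i
  have hexcl : ∀ D ∈ demand v (p + eVec i + eVec j), i ∉ D := by
    intro D hD hiD
    have hval : util v (p + eVec i + eVec j) D = uMax v p - 1 := by
      rw [← uMax_eq_of_mem hD, huij]
    rw [util_add_eVec, util_add_eVec, if_pos hiD] at hval
    have hub := le_uMax v p D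
    have hDd : D ∈ demand v p := by
      refine mem_demand.2 fun T => ?_
      have := le_uMax v p T
      split at hval <;> omega
    have hjD := hDj D hDd
    rw [if_pos hjD] at hval
    have := uMax_eq_of_mem hDd
    omega
  obtain ⟨A, hA⟩ := demand_nonempty v p
  have hiA := hDi A hA
  have hAval := uMax_eq_of_mem hA
  have hA' : A ∈ demand v (p + eVec i) := by
    refine mem_demand.2 fun T => ?_
    rw [util_add_eVec, util_add_eVec, if_pos hiA]
    by_cases hiT : i ∈ T
    · rw [if_pos hiT]
      have := mem_demand.1 hA T
      omega
    · rw [if_neg hiT]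
      have hle := le_uMax v p T
      rcases lt_or_eq_of_le hle with h | h
      · omega
      · exfalso
        apply hiT
        refine hDi T (mem_demand.2 fun T' => ?_)
        have := le_uMax v p T'
        omega
  obtain ⟨S', hS', hkeep⟩ := hgs (p + eVec i) (p + eVec i + eVec j) (le_add_eVec _ j) A hA'
  have hiS' : i ∈ S' := by
    refine hkeep i hiA ?_
    show (p + eVec i) i = (p + eVec i) i + eVec j i
    simp [eVec, hij]
  exact hexcl S' hS' hiS'

section Abstract

variable {m : ℕ} (F : (Fin m → ℕ) → ℤ)

/-- Step 1: unit direction vs arbitrary disjoint offset. -/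
lemma step1 (hloc : ∀ p (i j : Fin m), i ≠ j →
      F p + F (p + eVec i + eVec j) ≤ F (p + eVec i) + F (p + eVec j)) :
    ∀ (N : ℕ) (y p : Fin m → ℕ) (i : Fin m), (∑ k, y k) ≤ N → y i = 0 →
      F p + F (p + eVec i + y) ≤ F (p + eVec i) + F (p + y) := by
  intro N
  induction N with
  | zero =>
    intro y p i hsum hyi
    have hy : y = 0 := by
      funext k
      have := Finset.sum_eq_zero_iff.1 (Nat.le_zero.1 hsum) k (Finset.mem_univ k)
      exact this
    subst hy
    rw [add_zero, add_zero]
    linarith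
  | succ N ih =>
    intro y p i hsum hyi
    by_cases hz : ∑ k, y k = 0
    · have hy : y = 0 := by
        funext k
        exact Finset.sum_eq_zero_iff.1 hz k (Finset.mem_univ k)
      subst hy
      rw [add_zero, add_zero]
      linarith
    · obtain ⟨j, _, hj⟩ := Finset.exists_ne_zero_of_sum_ne_zero hz
      have hij : i ≠ j := fun h => hj (h ▸ hyi)
      set y' : Fin m → ℕ := fun k => if k = j then y k - 1 else y k with hy'def
      have hyy : y' + eVec j = y := by
        funext k
        simp only [Pi.add_apply, eVec, hy'def]
        by_cases hk : k = j
        · subst hk; simp; omega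
        · simp [hk]
      have hy'i : y' i = 0 := by simp [hy'def, hij, hyi]
      have hsum' : (∑ k, y' k) ≤ N := by
        have h1 : (∑ k, (y' + eVec j) k) = ∑ k, y k := by rw [hyy]
        have h2 : (∑ k, (y' + eVec j) k) = (∑ k, y' k) + ∑ k, eVec j k := by
          simp [Pi.add_apply, Finset.sum_add_distrib]
        have h3 : (∑ k, eVec j k) = 1 := by
          simp [eVec, Finset.sum_ite_eq']
        omega
      have hA := ih y' p i hsum' hy'i
      have hB := hloc (p + y') i j hij
      have hrw1 : p + y' + eVec i + eVec j = p + eVec i + y := by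
        rw [← hyy]; funext k; simp only [Pi.add_apply]; omega
      have hrw2 : p + y' + eVec i = p + eVec i + y' := by
        funext k; simp only [Pi.add_apply]; omega
      have hrw3 : p + y' + eVec j = p + y := by
        rw [← hyy]; funext k; simp only [Pi.add_apply]; omega
      rw [hrw1, hrw2, hrw3] at hB
      linarith

/-- Step 2: full submodularity from local submodularity. -/
lemma step2 (hloc : ∀ p (i j : Fin m), i ≠ j →
      F p + F (p + eVec i + eVec j) ≤ F (p + eVec i) + F (p + eVec j)) :
    ∀ (N : ℕ) (x y p : Fin m → ℕ), (∑ k, x k) ≤ N → (∀ k, x k = 0 ∨ y k = 0) →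
      F p + F (p + x + y) ≤ F (p + x) + F (p + y) := by
  intro N
  induction N with
  | zero =>
    intro x y p hsum _
    have hx : x = 0 := by
      funext k
      exact Finset.sum_eq_zero_iff.1 (Nat.le_zero.1 hsum) k (Finset.mem_univ k)
    subst hx
    simp only [add_zero]
    exact le_rfl
  | succ N ih =>
    intro x y p hsum hdisj
    by_cases hz : ∑ k, x k = 0
    · have hx : x = 0 := by
        funext k
        exact Finset.sum_eq_zero_iff.1 hz k (Finset.mem_univ k)
      subst hx
      simp only [add_zero]
      exact le_rfl
    · obtain ⟨i, _, hi⟩ := Finset.exists_ne_zero_of_sum_ne_zero hz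
      have hyi : y i = 0 := (hdisj i).resolve_left hi
      set x' : Fin m → ℕ := fun k => if k = i then x k - 1 else x k with hx'def
      have hxx : x' + eVec i = x := by
        funext k
        simp only [Pi.add_apply, eVec, hx'def]
        by_cases hk : k = i
        · subst hk; simp; omega
        · simp [hk]
      have hsum' : (∑ k, x' k) ≤ N := by
        have h1 : (∑ k, (x' + eVec i) k) = ∑ k, x k := by rw [hxx]
        have h2 : (∑ k, (x' + eVec i) k) = (∑ k, x' k) + ∑ k, eVec i k := by
          simp [Pi.add_apply, Finset.sum_add_distrib]
        have h3 : (∑ k, eVec i k) = 1 := by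
          simp [eVec, Finset.sum_ite_eq']
        omega
      have hdisj' : ∀ k, x' k = 0 ∨ y k = 0 := by
        intro k
        rcases hdisj k with h | h
        · left; simp [hx'def, h]
        · right; exact h
      have hA := step1 F hloc (∑ k, y k) y (p + x') i le_rfl hyi
      have hB := ih x' y p hsum' hdisj'
      have hrw1 : p + x' + eVec i + y = p + x + y := by
        rw [← hxx]; funext k; simp only [Pi.add_apply]; omega
      have hrw2 : p + x' + eVec i = p + x := by
        rw [← hxx]; funext k; simp only [Pi.add_apply]; omega
      rw [hrw1, hrw2] at hA
      linarith

end Abstract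

lemma lyap_local {m n : ℕ} (v : Fin n → Finset (Fin m) → ℕ) (hgs : ∀ i, GrossSub (v i))
    (p : Fin m → ℕ) (i j : Fin m) (hij : i ≠ j) :
    lyap v p + lyap v (p + eVec i + eVec j) ≤ lyap v (p + eVec i) + lyap v (p + eVec j) := by
  unfold lyap
  have hsum : ∀ b : Fin n, uMax (v b) p + uMax (v b) (p + eVec i + eVec j) ≤
      uMax (v b) (p + eVec i) + uMax (v b) (p + eVec j) :=
    fun b => local_submod (v b) (hgs b) p i j hij
  have hU : (∑ b, uMax (v b) p) + ∑ b, uMax (v b) (p + eVec i + eVec j) ≤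
      (∑ b, uMax (v b) (p + eVec i)) + ∑ b, uMax (v b) (p + eVec j) := by
    rw [← Finset.sum_add_distrib, ← Finset.sum_add_distrib]
    exact Finset.sum_le_sum fun b _ => hsum b
  have hcast : ∀ (r : Fin m → ℕ) (k : Fin m), (((r + eVec k) : Fin m → ℕ) = fun l => r l + eVec k l) := fun _ _ => rfl
  have hadd : ∀ (r : Fin m → ℕ) (k : Fin m),
      (∑ l, ((r + eVec k) l : ℤ)) = (∑ l, (r l : ℤ)) + 1 := by
    intro r k
    have : (∑ l, ((r + eVec k) l : ℤ)) = ∑ l, ((r l : ℤ) + (if l = k then (1:ℤ) else 0)) := by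
      refine Finset.sum_congr rfl fun l _ => ?_
      simp only [Pi.add_apply, eVec]
      split <;> push_cast <;> ring
    rw [this, Finset.sum_add_distrib, Finset.sum_ite_eq' Finset.univ k (fun _ => (1:ℤ)),
      if_pos (Finset.mem_univ k)]
  have hp1 := hadd p i
  have hp2 := hadd p j
  have hp3 := hadd (p + eVec i) j
  linarith

theorem stmt19 {m n : ℕ} (v : Fin n → Finset (Fin m) → ℕ)
    (hzero : ∀ i, v i ∅ = 0) (hmono : ∀ i, MonotoneVal (v i))
    (hgs : ∀ i, GrossSub (v i))
    (p q : Fin m → ℕ) :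
    lyap v (fun j => min (p j) (q j)) + lyap v (fun j => max (p j) (q j)) ≤
      lyap v p + lyap v q := by
  set a : Fin m → ℕ := fun j => min (p j) (q j) with ha
  set x : Fin m → ℕ := fun j => p j - min (p j) (q j) with hx
  set y : Fin m → ℕ := fun j => q j - min (p j) (q j) with hy
  have hxp : a + x = p := by funext k; simp only [Pi.add_apply, ha, hx]; omega
  have hyq : a + x + y = fun j => max (p j) (q j) := by
    funext k; simp only [Pi.add_apply, ha, hx, hy]; omega
  have hay : a + y = q := by funext k; simp only [Pi.add_apply, ha, hy]; omega
  have hdisj : ∀ k, x k = 0 ∨ y k = 0 := by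
    intro k; simp only [hx, hy]; omega
  have := step2 (lyap v) (lyap_local v hgs) (∑ k, x k) x y a le_rfl hdisj
  rw [hyq, hxp, hay] at this
  linarith
end
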